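/- Let w ≥ 1 and u₁, u₂ ∈ [0,1]. For i ∈ {1,2} and j ∈ {1,…,w}, let C_{ij} : ℝ × ℝ → ℝ be jointly continuous on [0,1]² together with its second-variable partial derivatives up to order two, and suppose that for every v ∈ [0,1]: C_{ij}(v,0) = 0, C_{ij}(v,1) = v, and 0 ≤ ∂₂C_{ij}(v,t) ≤ 1 for all t ∈ [0,1]. Assume that for each j, either (C_{1j}(v,t) ≤ v·t for all v,t ∈ [0,1] and ∂²₂C_{2j}(v,t) ≤ 0 for all v,t ∈ [0,1]) or (C_{2j}(v,t) ≤ v·t for all v,t ∈ [0,1] and ∂²₂C_{1j}(v,t) ≤ 0 for all v,t ∈ [0,1]). Let G : ℝ³ → ℝ be continuous on [0,1]³ with G(t,a,b) ≤ a·b for all t,a,b ∈ [0,1]. Define, for t = (t₁,…,t_w) ∈ [0,1]^w, G_i(t) as the iterated composition obtained by starting from u_i and successively applying v ↦ ∂₂C_{ij}(v, t_j) for j = 1,…,w. Then ∫_{[0,1]^w} G(t_w, G₁(t), G₂(t)) dt ≤ u₁·u₂. (This is the paper's Proposition that a bivariate nested extended one-factor copula with w layers whose inner copula is NQD, with at each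 layer j one linking copula NQD and the other SI with respect to the factor T_j, is NQD.) -/

import Mathlib

open MeasureTheory Set


lemma NEOFC.contOn_slice {f : ℝ → ℝ → ℝ}
    (hf : ContinuousOn (fun p : ℝ × ℝ => f p.1 p.2) (Icc 0 1 ×ˢ Icc 0 1))
    {v : ℝ} (hv : v ∈ Icc (0:ℝ) 1) : ContinuousOn (fun t => f v t) (Icc (0:ℝ) 1) :=
  hf.comp ((continuous_const.prodMk continuous_id).continuousOn) (fun t ht => ⟨hv, ht⟩)

lemma NEOFC.key_layer (c₁ d₁ c₂ d₂ e₂ : ℝ → ℝ) (a b : ℝ)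
    (hd₁ : ∀ t ∈ Icc (0:ℝ) 1, HasDerivAt c₁ (d₁ t) t)
    (hd₂ : ∀ t ∈ Icc (0:ℝ) 1, HasDerivAt c₂ (d₂ t) t)
    (he₂ : ∀ t ∈ Icc (0:ℝ) 1, HasDerivAt d₂ (e₂ t) t)
    (hd₁c : ContinuousOn d₁ (Icc 0 1))
    (he₂c : ContinuousOn e₂ (Icc 0 1))
    (hc₁0 : c₁ 0 = 0) (hc₁1 : c₁ 1 = a) (hc₂0 : c₂ 0 = 0) (hc₂1 : c₂ 1 = b)
    (hnqd : ∀ t ∈ Icc (0:ℝ) 1, c₁ t ≤ a * t)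
    (hsi : ∀ t ∈ Icc (0:ℝ) 1, e₂ t ≤ 0) :
    ∫ t in Icc (0:ℝ) 1, d₁ t * d₂ t ≤ a * b := by
  have huIcc : Set.uIcc (0:ℝ) 1 = Icc 0 1 := Set.uIcc_of_le zero_le_one
  have hc₁c : ContinuousOn c₁ (Icc (0:ℝ) 1) :=
    fun t ht => (hd₁ t ht).continuousAt.continuousWithinAt
  have hc₂c : ContinuousOn c₂ (Icc (0:ℝ) 1) :=
    fun t ht => (hd₂ t ht).continuousAt.continuousWithinAt
  have hd₂c : ContinuousOn d₂ (Icc (0:ℝ) 1) :=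
    fun t ht => (he₂ t ht).continuousAt.continuousWithinAt
  -- interval integrability
  have hi_dd : IntervalIntegrable (fun t => d₁ t * d₂ t) volume 0 1 :=
    ContinuousOn.intervalIntegrable (by rw [huIcc]; exact hd₁c.mul hd₂c)
  have hi_ce : IntervalIntegrable (fun t => c₁ t * e₂ t) volume 0 1 :=
    ContinuousOn.intervalIntegrable (by rw [huIcc]; exact hc₁c.mul he₂c)
  have hi_te : IntervalIntegrable (fun t => t * e₂ t) volume 0 1 :=
    ContinuousOn.intervalIntegrable (by rw [huIcc]; exact (continuous_id.continuousOn).mul he₂c)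
  have hi_d₂ : IntervalIntegrable d₂ volume 0 1 :=
    ContinuousOn.intervalIntegrable (by rw [huIcc]; exact hd₂c)
  -- FTC computations
  have hA : ∫ t in (0:ℝ)..1, (d₁ t * d₂ t + c₁ t * e₂ t) = a * d₂ 1 := by
    have := intervalIntegral.integral_eq_sub_of_hasDerivAt
      (f := fun t => c₁ t * d₂ t) (f' := fun t => d₁ t * d₂ t + c₁ t * e₂ t)
      (fun t ht => by
        rw [huIcc] at ht
        exact (hd₁ t ht).mul (he₂ t ht))
      (hi_dd.add hi_ce)
    rw [this]; simp [hc₁0, hc₁1]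
  have hd2int : ∫ t in (0:ℝ)..1, d₂ t = b := by
    have := intervalIntegral.integral_eq_sub_of_hasDerivAt
      (f := c₂) (f' := d₂)
      (fun t ht => by rw [huIcc] at ht; exact hd₂ t ht) hi_d₂
    rw [this]; simp [hc₂0, hc₂1]
  have hB : ∫ t in (0:ℝ)..1, (d₂ t + t * e₂ t) = d₂ 1 := by
    have := intervalIntegral.integral_eq_sub_of_hasDerivAt
      (f := fun t => t * d₂ t) (f' := fun t => d₂ t + t * e₂ t)
      (fun t ht => by
        rw [huIcc] at ht
        have := (hasDerivAt_id t).mul (he₂ t ht)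
        exact this.congr_deriv (by simp))
      (hi_d₂.add hi_te)
    rw [this]; simp
  have hte : ∫ t in (0:ℝ)..1, t * e₂ t = d₂ 1 - b := by
    have := intervalIntegral.integral_add hi_d₂ hi_te
    rw [hB, hd2int] at this
    linarith
  -- monotonicity step
  have hmono : ∫ t in (0:ℝ)..1, a * (t * e₂ t) ≤ ∫ t in (0:ℝ)..1, c₁ t * e₂ t := by
    apply intervalIntegral.integral_mono_on zero_le_one
      (hi_te.const_mul a) hi_ce
    intro t ht
    have h1 := hnqd t ht
    have h2 := hsi t ht
    nlinarith
  have hae : ∫ t in (0:ℝ)..1, a * (t * e₂ t) = a * (d₂ 1 - b) := by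
    rw [intervalIntegral.integral_const_mul, hte]
  have hsplit : ∫ t in (0:ℝ)..1, d₁ t * d₂ t
      = a * d₂ 1 - ∫ t in (0:ℝ)..1, c₁ t * e₂ t := by
    have := intervalIntegral.integral_add hi_dd hi_ce
    rw [hA] at this
    linarith
  have key : ∫ t in (0:ℝ)..1, d₁ t * d₂ t ≤ a * b := by
    rw [hsplit]
    nlinarith [hmono, hae]
  calc ∫ t in Icc (0:ℝ) 1, d₁ t * d₂ t
      = ∫ t in (0:ℝ)..1, d₁ t * d₂ t := by
        rw [intervalIntegral.integral_of_le zero_le_one, integral_Icc_eq_integral_Ioc]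
    _ ≤ a * b := key

lemma NEOFC.foldl_cont {X : Type*} [TopologicalSpace X] {n : ℕ} {s : Set X}
    (f : Fin n → ℝ → X → ℝ)
    (hc : ∀ j, ContinuousOn (fun p : ℝ × X => f j p.1 p.2) (Icc 0 1 ×ˢ s))
    (hb : ∀ j, ∀ v ∈ Icc (0:ℝ) 1, ∀ x ∈ s, f j v x ∈ Icc (0:ℝ) 1)
    (g : X → ℝ) (hg : ContinuousOn g s) (hgb : ∀ x ∈ s, g x ∈ Icc (0:ℝ) 1) :
    ContinuousOn (fun x => Fin.foldl n (fun a j => f j a x) (g x)) s ∧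
      ∀ x ∈ s, Fin.foldl n (fun a j => f j a x) (g x) ∈ Icc (0:ℝ) 1 := by
  induction n generalizing g with
  | zero => simpa [Fin.foldl_zero] using ⟨hg, hgb⟩
  | succ n ih =>
    have hg' : ContinuousOn (fun x => f 0 (g x) x) s :=
      (hc 0).comp (hg.prodMk (continuous_id.continuousOn)) (fun x hx => ⟨hgb x hx, hx⟩)
    have hgb' : ∀ x ∈ s, f 0 (g x) x ∈ Icc (0:ℝ) 1 := fun x hx => hb 0 _ (hgb x hx) x hx
    have h := ih (fun j => f j.succ) (fun j => hc j.succ) (fun j => hb j.succ)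
      (fun x => f 0 (g x) x) hg' hgb'
    simpa [Fin.foldl_succ] using h

lemma NEOFC.aux (w : ℕ) : ∀ (u₁ u₂ : ℝ), u₁ ∈ Icc (0:ℝ) 1 → u₂ ∈ Icc (0:ℝ) 1 →
    ∀ (C D D2 : Fin 2 → Fin w → ℝ → ℝ → ℝ),
    (∀ i j, ContinuousOn (fun p : ℝ × ℝ => D i j p.1 p.2) (Icc 0 1 ×ˢ Icc 0 1)) →
    (∀ i j, ContinuousOn (fun p : ℝ × ℝ => D2 i j p.1 p.2) (Icc 0 1 ×ˢ Icc 0 1)) →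
    (∀ i j, ∀ v ∈ Icc (0:ℝ) 1, ∀ t ∈ Icc (0:ℝ) 1,
      HasDerivAt (fun s => C i j v s) (D i j v t) t) →
    (∀ i j, ∀ v ∈ Icc (0:ℝ) 1, ∀ t ∈ Icc (0:ℝ) 1,
      HasDerivAt (fun s => D i j v s) (D2 i j v t) t) →
    (∀ i j, ∀ v ∈ Icc (0:ℝ) 1, C i j v 0 = 0) →
    (∀ i j, ∀ v ∈ Icc (0:ℝ) 1, C i j v 1 = v) →
    (∀ i j, ∀ v ∈ Icc (0:ℝ) 1, ∀ t ∈ Icc (0:ℝ) 1, D i j v t ∈ Icc (0:ℝ) 1) →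
    (∀ j, ((∀ v ∈ Icc (0:ℝ) 1, ∀ t ∈ Icc (0:ℝ) 1, C 0 j v t ≤ v * t) ∧
        (∀ v ∈ Icc (0:ℝ) 1, ∀ t ∈ Icc (0:ℝ) 1, D2 1 j v t ≤ 0)) ∨
      ((∀ v ∈ Icc (0:ℝ) 1, ∀ t ∈ Icc (0:ℝ) 1, C 1 j v t ≤ v * t) ∧
        (∀ v ∈ Icc (0:ℝ) 1, ∀ t ∈ Icc (0:ℝ) 1, D2 0 j v t ≤ 0))) →
    (∫ t in Set.univ.pi (fun _ : Fin w => Icc (0:ℝ) 1),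
      (Fin.foldl w (fun a j => D 0 j a (t j)) u₁) *
      (Fin.foldl w (fun a j => D 1 j a (t j)) u₂)) ≤ u₁ * u₂ := by
  induction w with
  | zero =>
    intro u₁ u₂ hu₁ hu₂ C D D2 _ _ _ _ _ _ _ _
    simp only [Fin.foldl_zero]
    rw [setIntegral_const]
    have : (volume (Set.univ.pi fun _ : Fin 0 => Icc (0:ℝ) 1)).toReal = 1 := by
      rw [volume_pi_pi]
      simp
    rw [measureReal_def, this, one_smul]
  | succ n ih =>
    intro u₁ u₂ hu₁ hu₂ C D D2 hDc hD2c hder hder2 hC0 hC1 hDb hcase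
    set T := Set.univ.pi (fun _ : Fin n => Icc (0:ℝ) 1) with hT
    set e := MeasurableEquiv.piFinSuccAbove (fun _ : Fin (n+1) => ℝ) 0 with he
    set F : ℝ × (Fin n → ℝ) → ℝ := fun p =>
      (Fin.foldl n (fun a j => D 0 j.succ a (p.2 j)) (D 0 0 u₁ p.1)) *
      (Fin.foldl n (fun a j => D 1 j.succ a (p.2 j)) (D 1 0 u₂ p.1)) with hF
    have hcomp : ∀ t : Fin (n+1) → ℝ,
        (Fin.foldl (n+1) (fun a j => D 0 j a (t j)) u₁) *
        (Fin.foldl (n+1) (fun a j => D 1 j a (t j)) u₂) = F (e t) := by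
      intro t
      simp [hF, he, MeasurableEquiv.piFinSuccAbove, Fin.foldl_succ, Fin.zero_succAbove, Fin.tail]
    have hpre : Set.univ.pi (fun _ : Fin (n+1) => Icc (0:ℝ) 1)
        = e ⁻¹' (Icc (0:ℝ) 1 ×ˢ T) := by
      ext t
      simp only [he, hT, Set.mem_preimage, MeasurableEquiv.piFinSuccAbove, Set.mem_prod,
        Set.mem_pi, Set.mem_univ, forall_true_left, true_implies, MeasurableEquiv.coe_mk,
        Equiv.coe_fn_mk, Fin.insertNthEquiv, Equiv.coe_fn_symm_mk, Fin.zero_succAbove,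
        Set.mem_Icc, Fin.forall_fin_succ, Fin.tail]
      tauto
    -- continuity and boundedness of F
    have hTcomp : IsCompact T := isCompact_univ_pi fun _ => isCompact_Icc
    have hprod_compact : IsCompact (Icc (0:ℝ) 1 ×ˢ T) := isCompact_Icc.prod hTcomp
    have hfold : ∀ (i : Fin 2) (u : ℝ), u ∈ Icc (0:ℝ) 1 →
        ContinuousOn (fun p : ℝ × (Fin n → ℝ) =>
          Fin.foldl n (fun a j => D i j.succ a (p.2 j)) (D i 0 u p.1)) (Icc 0 1 ×ˢ T) := by
      intro i u hu
      have hc : ∀ j : Fin n, ContinuousOn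
          (fun q : ℝ × (ℝ × (Fin n → ℝ)) => D i j.succ q.1 (q.2.2 j))
          (Icc 0 1 ×ˢ (Icc 0 1 ×ˢ T)) := by
        intro j
        have hmap : ContinuousOn (fun q : ℝ × (ℝ × (Fin n → ℝ)) => (q.1, q.2.2 j))
            (Icc 0 1 ×ˢ (Icc 0 1 ×ˢ T)) :=
          (continuous_fst.prodMk ((continuous_apply j).comp
            (continuous_snd.comp continuous_snd))).continuousOn
        exact ContinuousOn.comp (hDc i j.succ) hmap
          (fun q hq => ⟨hq.1, Set.mem_univ_pi.mp hq.2.2 j⟩)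
      have hgc : ContinuousOn (fun p : ℝ × (Fin n → ℝ) => D i 0 u p.1) (Icc 0 1 ×ˢ T) := by
        have hmap : ContinuousOn (fun p : ℝ × (Fin n → ℝ) => (u, p.1))
            (Icc 0 1 ×ˢ T) :=
          (continuous_const.prodMk continuous_fst).continuousOn
        show ContinuousOn ((fun p : ℝ × ℝ => D i 0 p.1 p.2) ∘
          (fun p : ℝ × (Fin n → ℝ) => (u, p.1))) (Icc 0 1 ×ˢ T)
        exact ContinuousOn.comp (hDc i 0) hmap (fun p hp => ⟨hu, hp.1⟩)
      refine (NEOFC.foldl_cont (s := Icc 0 1 ×ˢ T)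
        (fun j a p => D i j.succ a (p.2 j)) hc
        (fun j v hv p hp => hDb i j.succ v hv (p.2 j) (Set.mem_univ_pi.mp hp.2 j))
        (fun p => D i 0 u p.1) hgc
        (fun p hp => hDb i 0 u hu p.1 hp.1)).1
    have hFc : ContinuousOn F (Icc (0:ℝ) 1 ×ˢ T) := (hfold 0 u₁ hu₁).mul (hfold 1 u₂ hu₂)
    have hFint : IntegrableOn F (Icc (0:ℝ) 1 ×ˢ T) := hFc.integrableOn_compact hprod_compact
    have step1 : (∫ t in Set.univ.pi (fun _ : Fin (n+1) => Icc (0:ℝ) 1),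
        (Fin.foldl (n+1) (fun a j => D 0 j a (t j)) u₁) *
        (Fin.foldl (n+1) (fun a j => D 1 j a (t j)) u₂))
        = ∫ p in Icc (0:ℝ) 1 ×ˢ T, F p := by
      simp_rw [hcomp]
      rw [hpre, MeasureTheory.volume_pi,
        (measurePreserving_piFinSuccAbove (fun _ : Fin (n+1) => (volume : Measure ℝ)) 0).setIntegral_preimage_emb
          (MeasurableEquiv.measurableEmbedding e) F _]
      rw [← MeasureTheory.volume_pi, ← MeasureTheory.Measure.volume_eq_prod]
    have hFre : Integrable F ((volume.restrict (Icc (0:ℝ) 1)).prod (volume.restrict T)) := by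
      rw [Measure.prod_restrict, ← MeasureTheory.Measure.volume_eq_prod]
      exact hFint
    have step2 : ∫ p in Icc (0:ℝ) 1 ×ˢ T, F p = ∫ x in Icc (0:ℝ) 1, ∫ y in T, F (x, y) := by
      rw [MeasureTheory.Measure.volume_eq_prod]
      exact setIntegral_prod F (by rwa [← MeasureTheory.Measure.volume_eq_prod])
    have hinner_int : IntegrableOn (fun x => ∫ y in T, F (x, y)) (Icc (0:ℝ) 1) :=
      hFre.integral_prod_left
    have hinner_le : ∀ x ∈ Icc (0:ℝ) 1, (∫ y in T, F (x, y)) ≤ D 0 0 u₁ x * D 1 0 u₂ x := by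
      intro x hx
      exact ih (D 0 0 u₁ x) (D 1 0 u₂ x) (hDb 0 0 u₁ hu₁ x hx) (hDb 1 0 u₂ hu₂ x hx)
        (fun i j => C i j.succ) (fun i j => D i j.succ) (fun i j => D2 i j.succ)
        (fun i j => hDc i j.succ) (fun i j => hD2c i j.succ)
        (fun i j => hder i j.succ) (fun i j => hder2 i j.succ)
        (fun i j => hC0 i j.succ) (fun i j => hC1 i j.succ) (fun i j => hDb i j.succ)
        (fun j => hcase j.succ)
    have hDD_cont : ContinuousOn (fun x => D 0 0 u₁ x * D 1 0 u₂ x) (Icc (0:ℝ) 1) :=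
      (NEOFC.contOn_slice (hDc 0 0) hu₁).mul (NEOFC.contOn_slice (hDc 1 0) hu₂)
    have hDD_int : IntegrableOn (fun x => D 0 0 u₁ x * D 1 0 u₂ x) (Icc (0:ℝ) 1) :=
      hDD_cont.integrableOn_compact isCompact_Icc
    have step3 : (∫ x in Icc (0:ℝ) 1, ∫ y in T, F (x, y))
        ≤ ∫ x in Icc (0:ℝ) 1, D 0 0 u₁ x * D 1 0 u₂ x :=
      setIntegral_mono_on hinner_int hDD_int measurableSet_Icc hinner_le
    have step4 : (∫ x in Icc (0:ℝ) 1, D 0 0 u₁ x * D 1 0 u₂ x) ≤ u₁ * u₂ := by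
      rcases hcase 0 with ⟨h1, h2⟩ | ⟨h1, h2⟩
      · exact NEOFC.key_layer (C 0 0 u₁) (D 0 0 u₁) (C 1 0 u₂) (D 1 0 u₂) (D2 1 0 u₂) u₁ u₂
          (hder 0 0 u₁ hu₁) (hder 1 0 u₂ hu₂) (hder2 1 0 u₂ hu₂)
          (NEOFC.contOn_slice (hDc 0 0) hu₁) (NEOFC.contOn_slice (hD2c 1 0) hu₂)
          (hC0 0 0 u₁ hu₁) (hC1 0 0 u₁ hu₁) (hC0 1 0 u₂ hu₂) (hC1 1 0 u₂ hu₂)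
          (h1 u₁ hu₁) (h2 u₂ hu₂)
      · have hk := NEOFC.key_layer (C 1 0 u₂) (D 1 0 u₂) (C 0 0 u₁) (D 0 0 u₁) (D2 0 0 u₁) u₂ u₁
          (hder 1 0 u₂ hu₂) (hder 0 0 u₁ hu₁) (hder2 0 0 u₁ hu₁)
          (NEOFC.contOn_slice (hDc 1 0) hu₂) (NEOFC.contOn_slice (hD2c 0 0) hu₁)
          (hC0 1 0 u₂ hu₂) (hC1 1 0 u₂ hu₂) (hC0 0 0 u₁ hu₁) (hC1 0 0 u₁ hu₁)
          (h1 u₂ hu₂) (h2 u₁ hu₁)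
        calc (∫ x in Icc (0:ℝ) 1, D 0 0 u₁ x * D 1 0 u₂ x)
            = ∫ x in Icc (0:ℝ) 1, D 1 0 u₂ x * D 0 0 u₁ x := by simp_rw [mul_comm]
          _ ≤ u₂ * u₁ := hk
          _ = u₁ * u₂ := mul_comm _ _
    rw [step1, step2]
    exact le_trans step3 step4

/-- A bivariate nested extended one-factor copula with `w` layers whose inner copula is
NQD for every factor value (`G t a b ≤ a b`), such that at each layer `j` one linking
copula is NQD and the other is SI with respect to the factor `T_j`, is NQD. Here
`C i j`, `D i j`, `D2 i j` are the linking copula of variable `i` at layer `j`, its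
second-variable partial derivative and second second-variable partial derivative, and
`Fin.foldl w (fun a j => D i j a (t j)) uᵢ` is the iterated composition
`G_i(u_i; t_w, …, t_1)`. -/
theorem neofc_w_layers_nqd (w : ℕ) (hw : 1 ≤ w) (u₁ u₂ : ℝ)
    (hu₁ : u₁ ∈ Set.Icc (0:ℝ) 1) (hu₂ : u₂ ∈ Set.Icc (0:ℝ) 1)
    (C D D2 : Fin 2 → Fin w → ℝ → ℝ → ℝ)
    (hCc : ∀ i j, ContinuousOn (fun p : ℝ × ℝ => C i j p.1 p.2)
      (Set.Icc 0 1 ×ˢ Set.Icc 0 1))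
    (hDc : ∀ i j, ContinuousOn (fun p : ℝ × ℝ => D i j p.1 p.2)
      (Set.Icc 0 1 ×ˢ Set.Icc 0 1))
    (hD2c : ∀ i j, ContinuousOn (fun p : ℝ × ℝ => D2 i j p.1 p.2)
      (Set.Icc 0 1 ×ˢ Set.Icc 0 1))
    (hder : ∀ i j, ∀ v ∈ Set.Icc (0:ℝ) 1, ∀ t ∈ Set.Icc (0:ℝ) 1,
      HasDerivAt (fun s => C i j v s) (D i j v t) t)
    (hder2 : ∀ i j, ∀ v ∈ Set.Icc (0:ℝ) 1, ∀ t ∈ Set.Icc (0:ℝ) 1,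
      HasDerivAt (fun s => D i j v s) (D2 i j v t) t)
    (hC0 : ∀ i j, ∀ v ∈ Set.Icc (0:ℝ) 1, C i j v 0 = 0)
    (hC1 : ∀ i j, ∀ v ∈ Set.Icc (0:ℝ) 1, C i j v 1 = v)
    (hDb : ∀ i j, ∀ v ∈ Set.Icc (0:ℝ) 1, ∀ t ∈ Set.Icc (0:ℝ) 1,
      D i j v t ∈ Set.Icc (0:ℝ) 1)
    (hcase : ∀ j,
      ((∀ v ∈ Set.Icc (0:ℝ) 1, ∀ t ∈ Set.Icc (0:ℝ) 1, C 0 j v t ≤ v * t) ∧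
        (∀ v ∈ Set.Icc (0:ℝ) 1, ∀ t ∈ Set.Icc (0:ℝ) 1, D2 1 j v t ≤ 0)) ∨
      ((∀ v ∈ Set.Icc (0:ℝ) 1, ∀ t ∈ Set.Icc (0:ℝ) 1, C 1 j v t ≤ v * t) ∧
        (∀ v ∈ Set.Icc (0:ℝ) 1, ∀ t ∈ Set.Icc (0:ℝ) 1, D2 0 j v t ≤ 0)))
    (G : ℝ → ℝ → ℝ → ℝ)
    (hGc : ContinuousOn (fun p : ℝ × ℝ × ℝ => G p.1 p.2.1 p.2.2)
      (Set.Icc 0 1 ×ˢ Set.Icc 0 1 ×ˢ Set.Icc 0 1))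
    (hG : ∀ t ∈ Set.Icc (0:ℝ) 1, ∀ a ∈ Set.Icc (0:ℝ) 1, ∀ b ∈ Set.Icc (0:ℝ) 1,
      G t a b ≤ a * b) :
    (∫ t in Set.univ.pi (fun _ : Fin w => Set.Icc (0:ℝ) 1),
      G (t ⟨w - 1, by omega⟩)
        (Fin.foldl w (fun a j => D 0 j a (t j)) u₁)
        (Fin.foldl w (fun a j => D 1 j a (t j)) u₂)) ≤ u₁ * u₂ := by
  set S := Set.univ.pi (fun _ : Fin w => Set.Icc (0:ℝ) 1) with hS
  have hSmeas : MeasurableSet S := MeasurableSet.univ_pi fun _ => measurableSet_Icc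
  have hScomp : IsCompact S := isCompact_univ_pi fun _ => isCompact_Icc
  have hfold : ∀ (i : Fin 2) (u : ℝ), u ∈ Set.Icc (0:ℝ) 1 →
      ContinuousOn (fun t : Fin w → ℝ => Fin.foldl w (fun a j => D i j a (t j)) u) S ∧
      ∀ t ∈ S, Fin.foldl w (fun a j => D i j a (t j)) u ∈ Set.Icc (0:ℝ) 1 := by
    intro i u hu
    have hc : ∀ j : Fin w, ContinuousOn (fun q : ℝ × (Fin w → ℝ) => D i j q.1 (q.2 j))
        (Set.Icc 0 1 ×ˢ S) := by
      intro j
      have hmap : ContinuousOn (fun q : ℝ × (Fin w → ℝ) => (q.1, q.2 j))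
          (Set.Icc 0 1 ×ˢ S) :=
        (continuous_fst.prodMk ((continuous_apply j).comp continuous_snd)).continuousOn
      exact ContinuousOn.comp (hDc i j) hmap
        (fun q hq => ⟨hq.1, Set.mem_univ_pi.mp hq.2 j⟩)
    exact NEOFC.foldl_cont (fun j a t => D i j a (t j)) hc
      (fun j v hv t ht => hDb i j v hv (t j) (Set.mem_univ_pi.mp ht j))
      (fun _ => u) continuousOn_const (fun _ _ => hu)
  have hF1 := hfold 0 u₁ hu₁
  have hF2 := hfold 1 u₂ hu₂
  have hGcomp : ContinuousOn (fun t : Fin w → ℝ =>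
      G (t ⟨w - 1, by omega⟩) (Fin.foldl w (fun a j => D 0 j a (t j)) u₁)
        (Fin.foldl w (fun a j => D 1 j a (t j)) u₂)) S := by
    have hmap : ContinuousOn (fun t : Fin w → ℝ =>
        ((t ⟨w - 1, by omega⟩ : ℝ), (Fin.foldl w (fun a j => D 0 j a (t j)) u₁,
          Fin.foldl w (fun a j => D 1 j a (t j)) u₂))) S :=
      ((continuous_apply _).continuousOn).prodMk (hF1.1.prodMk hF2.1)
    exact ContinuousOn.comp hGc hmap
      (fun t ht => ⟨Set.mem_univ_pi.mp ht _, hF1.2 t ht, hF2.2 t ht⟩)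
  have hint1 : IntegrableOn (fun t : Fin w → ℝ =>
      G (t ⟨w - 1, by omega⟩) (Fin.foldl w (fun a j => D 0 j a (t j)) u₁)
        (Fin.foldl w (fun a j => D 1 j a (t j)) u₂)) S :=
    hGcomp.integrableOn_compact hScomp
  have hint2 : IntegrableOn (fun t : Fin w → ℝ =>
      (Fin.foldl w (fun a j => D 0 j a (t j)) u₁) *
      (Fin.foldl w (fun a j => D 1 j a (t j)) u₂)) S :=
    (hF1.1.mul hF2.1).integrableOn_compact hScomp
  have hptw : ∀ t ∈ S,
      G (t ⟨w - 1, by omega⟩) (Fin.foldl w (fun a j => D 0 j a (t j)) u₁)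
        (Fin.foldl w (fun a j => D 1 j a (t j)) u₂)
      ≤ (Fin.foldl w (fun a j => D 0 j a (t j)) u₁) *
        (Fin.foldl w (fun a j => D 1 j a (t j)) u₂) :=
    fun t ht => hG _ (Set.mem_univ_pi.mp ht _) _ (hF1.2 t ht) _ (hF2.2 t ht)
  calc (∫ t in S, G (t ⟨w - 1, by omega⟩)
        (Fin.foldl w (fun a j => D 0 j a (t j)) u₁)
        (Fin.foldl w (fun a j => D 1 j a (t j)) u₂))
      ≤ ∫ t in S, (Fin.foldl w (fun a j => D 0 j a (t j)) u₁) *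
          (Fin.foldl w (fun a j => D 1 j a (t j)) u₂) :=
        setIntegral_mono_on hint1 hint2 hSmeas hptw
    _ ≤ u₁ * u₂ :=
        NEOFC.aux w u₁ u₂ hu₁ hu₂ C D D2 hDc hD2c hder hder2 hC0 hC1 hDb hcase
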